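/- Let F be a field of characteristic ≠ 2, T = [t_{rk}] a strictly lower triangular n×n matrix over F, 1 ≤ r₁ ≤ n and α ∈ F, α ≠ 0. Define S = [s_{rk}] by s_{rk} = t_{rk}/α if r = r₁, s_{rk} = α t_{rk} if k = r₁, and s_{rk} = t_{rk} otherwise. Then A(T) ≅ A(S) as F-algebras, via an isomorphism sending X_{r₁} ↦ α Y_{r₁} and X_r ↦ Y_r for r ≠ r₁. -/

import Mathlib

open scoped BigOperators

noncomputable section

variable {F : Type} [Field F]

/-- `T` is strictly lower triangular. -/
def SLT {n : ℕ} (T : Matrix (Fin n) (Fin n) F) : Prop :=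
  ∀ i j : Fin n, i ≤ j → T i j = 0

/-- The ideal of relations defining the nil graded algebra `A(T)`:
`X i ^ 2 = ∑ j < i, T i j * X j * X i` (for `i = 0` the sum is empty, giving `X 0 ^ 2 = 0`). -/
def ntIdeal {n : ℕ} (T : Matrix (Fin n) (Fin n) F) : Ideal (MvPolynomial (Fin n) F) :=
  Ideal.span {p | ∃ i : Fin n,
    p = MvPolynomial.X i ^ 2 -
      ∑ j ∈ Finset.univ.filter (fun j => j < i),
        MvPolynomial.C (T i j) * MvPolynomial.X j * MvPolynomial.X i}

/-- The nil graded algebra `A(T)` associated to the strictly lower triangular matrix `T`. -/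
abbrev NTAlg {n : ℕ} (T : Matrix (Fin n) (Fin n) F) : Type :=
  MvPolynomial (Fin n) F ⧸ ntIdeal T

/-- The generator `X i` of `A(T)`. -/
def ntGen {n : ℕ} (T : Matrix (Fin n) (Fin n) F) (i : Fin n) : NTAlg T :=
  Ideal.Quotient.mk (ntIdeal T) (MvPolynomial.X i)

/-- There is a degree-preserving isomorphism `A(T) → A(S)`, i.e. an algebra isomorphism
sending each generator to an `F`-linear combination of the generators of the target. -/
def NTIso {n : ℕ} (T S : Matrix (Fin n) (Fin n) F) : Prop :=
  ∃ e : NTAlg T ≃ₐ[F] NTAlg S, ∃ Γ : Matrix (Fin n) (Fin n) F,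
    ∀ j : Fin n, e (ntGen T j) = ∑ i : Fin n, Γ i j • ntGen S i

/-!
Rescaling the generators, `X i ↦ c i • Y i`, carries the `i`-th defining relation of `A(T)` to
`c i ^ 2` times the `i`-th relation of `A(S)` exactly when `c i * S i j = T i j * c j` for `j < i`.
For units `c` the inverse scaling `c⁻¹` satisfies the same condition with `T` and `S` exchanged,
so the two rescalings are mutually inverse. `P_{r₁}(T, α)` is the case `c = Pi.mulSingle r₁ α`.
-/

open MvPolynomial Finset

theorem sq_mul_eq_of_mul_eq {R : Type*} [CommRing R] {a b s t : R} (h : a * s = t * b) :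
    a ^ 2 * s = t * b * a := by
  linear_combination a * h

variable {n : ℕ}

theorem ntGen_sq (T : Matrix (Fin n) (Fin n) F) (i : Fin n) :
    ntGen T i ^ 2 = ∑ j ∈ univ.filter (fun j => j < i), T i j • (ntGen T j * ntGen T i) := by
  have hrel : X i ^ 2 - ∑ j ∈ univ.filter (fun j => j < i), C (T i j) * X j * X i ∈ ntIdeal T :=
    Ideal.subset_span ⟨i, rfl⟩
  rw [← Ideal.Quotient.eq_zero_iff_mem, map_sub, sub_eq_zero] at hrel
  simp only [ntGen]
  rw [← map_pow, hrel, map_sum]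
  refine sum_congr rfl fun j _ => ?_
  rw [mul_assoc, map_mul, ← MvPolynomial.algebraMap_eq, Ideal.Quotient.mk_algebraMap,
    ← Algebra.smul_def, map_mul]

section Lift

variable {A : Type*} [CommRing A] [Algebra F A]

theorem ntIdeal_le_ker_aeval (T : Matrix (Fin n) (Fin n) F) (x : Fin n → A)
    (hx : ∀ i, x i ^ 2 = ∑ j ∈ univ.filter (fun j => j < i), T i j • (x j * x i)) :
    ntIdeal T ≤ RingHom.ker (aeval x) := by
  refine Ideal.span_le.mpr ?_
  rintro _ ⟨i, rfl⟩
  simp [hx i, Algebra.smul_def, mul_assoc]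

def ntLift (T : Matrix (Fin n) (Fin n) F) (x : Fin n → A)
    (hx : ∀ i, x i ^ 2 = ∑ j ∈ univ.filter (fun j => j < i), T i j • (x j * x i)) :
    NTAlg T →ₐ[F] A :=
  Ideal.Quotient.liftₐ (ntIdeal T) (aeval x) fun _ hp => ntIdeal_le_ker_aeval T x hx hp

theorem ntLift_ntGen (T : Matrix (Fin n) (Fin n) F) (x : Fin n → A)
    (hx : ∀ i, x i ^ 2 = ∑ j ∈ univ.filter (fun j => j < i), T i j • (x j * x i)) (i : Fin n) :
    ntLift T x hx (ntGen T i) = x i :=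
  aeval_X x i

theorem ntAlgHom_ext {T : Matrix (Fin n) (Fin n) F}
    {f g : NTAlg T →ₐ[F] A} (h : ∀ i, f (ntGen T i) = g (ntGen T i)) : f = g :=
  Ideal.Quotient.algHom_ext F (MvPolynomial.algHom_ext h)

end Lift

def ntScaleHom (T S : Matrix (Fin n) (Fin n) F) (c : Fin n → F)
    (hc : ∀ i j, j < i → c i ^ 2 * S i j = T i j * c j * c i) : NTAlg T →ₐ[F] NTAlg S :=
  ntLift T (fun i => c i • ntGen S i) fun i => by
    rw [smul_pow, ntGen_sq, smul_sum]
    refine sum_congr rfl fun j hj => ?_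
    rw [smul_smul, smul_mul_smul, smul_smul, hc i j (mem_filter.mp hj).2, mul_assoc]

theorem ntScaleHom_ntGen (T S : Matrix (Fin n) (Fin n) F) (c : Fin n → F)
    (hc : ∀ i j, j < i → c i ^ 2 * S i j = T i j * c j * c i) (i : Fin n) :
    ntScaleHom T S c hc (ntGen T i) = c i • ntGen S i :=
  ntLift_ntGen T _ _ i

def ntScaleEquiv (T S : Matrix (Fin n) (Fin n) F) (c : Fin n → Fˣ)
    (hc : ∀ i j, j < i → (c i : F) * S i j = T i j * c j) : NTAlg T ≃ₐ[F] NTAlg S :=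
  AlgEquiv.ofAlgHom (ntScaleHom T S (fun i => c i) fun i j hji => sq_mul_eq_of_mul_eq (hc i j hji))
    (ntScaleHom S T (fun i => ↑(c i)⁻¹) fun i j hji => sq_mul_eq_of_mul_eq <| by
      rw [Units.inv_mul_eq_iff_eq_mul, ← mul_assoc, hc i j hji, mul_assoc, Units.mul_inv, mul_one])
    (ntAlgHom_ext fun i => by simp [ntScaleHom_ntGen, smul_smul])
    (ntAlgHom_ext fun i => by simp [ntScaleHom_ntGen, smul_smul])

theorem ntScaleEquiv_ntGen (T S : Matrix (Fin n) (Fin n) F) (c : Fin n → Fˣ)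
    (hc : ∀ i j, j < i → (c i : F) * S i j = T i j * c j) (i : Fin n) :
    ntScaleEquiv T S c hc (ntGen T i) = (c i : F) • ntGen S i := by
  simp [ntScaleEquiv, ntScaleHom_ntGen]

theorem stmt4_general {n : ℕ} (T : Matrix (Fin n) (Fin n) F)
    (r₁ : Fin n) (α : F) (hα : α ≠ 0) (S : Matrix (Fin n) (Fin n) F)
    (hS : ∀ r k : Fin n, S r k =
      if r = r₁ then T r k / α else if k = r₁ then α * T r k else T r k) :
    ∃ e : NTAlg T ≃ₐ[F] NTAlg S,
      e (ntGen T r₁) = α • ntGen S r₁ ∧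
      ∀ r : Fin n, r ≠ r₁ → e (ntGen T r) = ntGen S r := by
  set c : Fin n → Fˣ := Pi.mulSingle r₁ (Units.mk0 α hα)
  have hc : ∀ i j, j < i → (c i : F) * S i j = T i j * c j := by
    intro i j hji
    rw [hS]
    by_cases hi : i = r₁
    · subst hi
      simp [c, hji.ne, mul_div_cancel₀ _ hα]
    · by_cases hj : j = r₁
      · simp [c, hi, hj, mul_comm]
      · simp [c, hi, hj]
  refine ⟨ntScaleEquiv T S c hc, ?_, fun r hr => ?_⟩
  · simp [ntScaleEquiv_ntGen, c]
  · simp [ntScaleEquiv_ntGen, c, hr]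

/-- The elementary triangular operation `P_{r₁}(T, α)` yields an isomorphic algebra,
via `X_{r₁} ↦ α Y_{r₁}`, `X_r ↦ Y_r` for `r ≠ r₁`. -/
theorem stmt4 {n : ℕ} (h2 : (2 : F) ≠ 0) (T : Matrix (Fin n) (Fin n) F) (hT : SLT T)
    (r₁ : Fin n) (α : F) (hα : α ≠ 0) (S : Matrix (Fin n) (Fin n) F)
    (hS : ∀ r k : Fin n, S r k =
      if r = r₁ then T r k / α else if k = r₁ then α * T r k else T r k) :
    ∃ e : NTAlg T ≃ₐ[F] NTAlg S,
      e (ntGen T r₁) = α • ntGen S r₁ ∧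
      ∀ r : Fin n, r ≠ r₁ → e (ntGen T r) = ntGen S r :=
  stmt4_general T r₁ α hα S hS
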